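/- arXiv:1908.02166 — 5 statements merged into one kernel-verified Lean document; each statement's English description precedes it below -/
import Mathlib

section
/- Let (Ω, F, μ) be a probability space, let w : Ω → ℝ^l be a measurable random vector, let s : Ω → {0,1} be measurable, and let z : Ω → ℝ be integrable. Assume: (i) E[z | σ(w)] = G ∘ w almost everywhere for some measurable function G : ℝ^l → ℝ; (ii) E[z | σ(w, s)] = E[z | σ(w)] almost everywhere, where σ(w, s) is the σ-algebra generated by w and s jointly. Then for each s₀ ∈ {0,1} with μ({s = s₀}) > 0, the expectation of z under the conditional measure μ(· | {s = s₀}) equals the expectation of G ∘ w under the same conditional measure: E[z | s = s₀] = E[G ∘ w | s = s₀]. -/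
open MeasureTheory ProbabilityTheory

/-- **Proposition 1.** If `E[z | σ(w)] = G ∘ w` a.e. and
`E[z | σ(w, s)] = E[z | σ(w)]` a.e., then for each value `s₀ ∈ {0,1}` of the
selection indicator with `μ {s = s₀} > 0`, the expectation of `z` under the
conditional measure `μ(· | {s = s₀})` equals that of `G ∘ w`. -/
theorem condexp_iv_given_selection
    {Ω : Type*} [MeasurableSpace Ω] (μ : Measure Ω) [IsProbabilityMeasure μ]
    {l : ℕ} (w : Ω → EuclideanSpace ℝ (Fin l)) (hw : Measurable w)
    (s : Ω → ℝ) (hs : Measurable s) (hs01 : ∀ ω, s ω = 0 ∨ s ω = 1)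
    (z : Ω → ℝ) (hz : Integrable z μ)
    (G : EuclideanSpace ℝ (Fin l) → ℝ) (hG : Measurable G)
    (hi : μ[z | MeasurableSpace.comap w inferInstance]
            =ᵐ[μ] fun ω => G (w ω))
    (hii : μ[z | MeasurableSpace.comap w inferInstance
                  ⊔ MeasurableSpace.comap s inferInstance]
            =ᵐ[μ] μ[z | MeasurableSpace.comap w inferInstance]) :
    ∀ s₀ : ℝ, (s₀ = 0 ∨ s₀ = 1) → 0 < μ {ω | s ω = s₀} →
      ∫ ω, z ω ∂(μ[|{ω | s ω = s₀}])
        = ∫ ω, G (w ω) ∂(μ[|{ω | s ω = s₀}]) := by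
  intro s₀ _ hpos
  have hm : (MeasurableSpace.comap w inferInstance
      ⊔ MeasurableSpace.comap s inferInstance : MeasurableSpace Ω) ≤ _ :=
    sup_le hw.comap_le hs.comap_le
  set A : Set Ω := {ω | s ω = s₀} with hA_def
  have hA_m : MeasurableSet[MeasurableSpace.comap w inferInstance
      ⊔ MeasurableSpace.comap s inferInstance] A :=
    (le_sup_right (α := MeasurableSpace Ω)) A
      ⟨{s₀}, measurableSet_singleton s₀, rfl⟩
  have hA : MeasurableSet A := hm A hA_m
  have h1 : ∫ ω in A, z ω ∂μ = ∫ ω in A, G (w ω) ∂μ := by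
    rw [← setIntegral_condExp hm hz hA_m]
    exact integral_congr_ae (ae_restrict_of_ae (hii.trans hi))
  simp only [ProbabilityTheory.cond, integral_smul_measure]
  rw [show (∫ ω in A, z ω ∂μ) = ∫ ω in A, G (w ω) ∂μ from h1]
end

section
/- Let (Ω, F, μ) be a probability space, s : Ω → {0,1} measurable with μ({s = 1}) > 0, and ν = μ(· | {s = 1}) the conditional probability measure. Let w : Ω → ℝ^l be measurable, γ ∈ ℝ^l, and let z, ε₁ : Ω → ℝ be such that z, ε₁, z·ε₁, and z·M(⟨w, γ⟩) are ν-integrable. Assume: (i) E_ν[z | σ(w)] = G ∘ w ν-a.e. for a measurable G; (ii) E_ν[ε₁ | σ(w)] = M(⟨w, γ⟩) ν-a.e. for a measurable M; (iii) E_ν[z·ε₁ | σ(w)] = (G ∘ w)·M(⟨w, γ⟩) ν-a.e. Then the instrument is orthogonal to the bias-removed disturbance under truncation: E_ν[z·(ε₁ − M(⟨w, γ⟩))] = 0, and moreover Cov_ν(z, ε₁ − M(⟨w, γ⟩)) = 0. -/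
/-!
Condition on `σ(w)`. By (ii), `M(⟨w, γ⟩)` is a version of `E_ν[ε₁ | σ(w)]`, and (i), (iii) say that
`z` and `ε₁` are conditionally uncorrelated: `E_ν[z ε₁ | σ(w)] = E_ν[z | σ(w)] E_ν[ε₁ | σ(w)]`.
Pulling the `σ(w)`-measurable factor out of `E_ν[z · E_ν[ε₁ | σ(w)] | σ(w)]` shows that
`z ε₁` and `z · E_ν[ε₁ | σ(w)]` have the same mean, so `z` is orthogonal to the residual
`ε₁ - E_ν[ε₁ | σ(w)]`. The residual has mean zero, so the covariance vanishes as well.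
-/

open MeasureTheory ProbabilityTheory

section ConditionallyUncorrelated

variable {Ω : Type*} {m m0 : MeasurableSpace Ω} {μ : Measure Ω}

theorem integral_sub_condExp_eq_zero (hm : m ≤ m0) [SigmaFinite (μ.trim hm)] {g : Ω → ℝ}
    (hg : Integrable g μ) : ∫ ω, (g ω - μ[g|m] ω) ∂μ = 0 := by
  rw [integral_sub hg integrable_condExp, integral_condExp hm, sub_self]

theorem integral_mul_sub_condExp_eq_zero (hm : m ≤ m0) [SigmaFinite (μ.trim hm)]
    {f g : Ω → ℝ} (hf : Integrable f μ) (hfg : Integrable (fun ω => f ω * g ω) μ)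
    (hfg' : Integrable (fun ω => f ω * μ[g|m] ω) μ)
    (hcorr : μ[fun ω => f ω * g ω|m] =ᵐ[μ] fun ω => μ[f|m] ω * μ[g|m] ω) :
    ∫ ω, f ω * (g ω - μ[g|m] ω) ∂μ = 0 := by
  have hpull : μ[fun ω => f ω * μ[g|m] ω|m] =ᵐ[μ] fun ω => μ[f|m] ω * μ[g|m] ω :=
    condExp_mul_of_stronglyMeasurable_right stronglyMeasurable_condExp hfg' hf
  calc ∫ ω, f ω * (g ω - μ[g|m] ω) ∂μ
      = ∫ ω, f ω * g ω ∂μ - ∫ ω, f ω * μ[g|m] ω ∂μ := by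
        simp_rw [mul_sub]
        exact integral_sub hfg hfg'
    _ = ∫ ω, μ[f|m] ω * μ[g|m] ω ∂μ - ∫ ω, μ[f|m] ω * μ[g|m] ω ∂μ := by
        rw [← integral_condExp hm, integral_congr_ae hcorr,
          ← integral_condExp hm (f := fun ω => f ω * μ[g|m] ω), integral_congr_ae hpull]
    _ = 0 := sub_self _

end ConditionallyUncorrelated

theorem iv_bias_removal_general
    {Ω : Type*} [MeasurableSpace Ω] (μ : Measure Ω)
    (s : Ω → ℝ)
    (ν : Measure Ω) (hν : ν = μ[|{ω | s ω = 1}])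
    {l : ℕ} (w : Ω → EuclideanSpace ℝ (Fin l)) (hw : Measurable w)
    (γ : EuclideanSpace ℝ (Fin l)) (z ε₁ : Ω → ℝ)
    (hz : Integrable z ν) (hε₁ : Integrable ε₁ ν)
    (hzε₁ : Integrable (fun ω => z ω * ε₁ ω) ν)
    (G : EuclideanSpace ℝ (Fin l) → ℝ)
    (M : ℝ → ℝ)
    (hzM : Integrable (fun ω => z ω * M (inner ℝ (w ω) γ : ℝ)) ν)
    (hi : ν[z | MeasurableSpace.comap w inferInstance]
            =ᵐ[ν] fun ω => G (w ω))
    (hii : ν[ε₁ | MeasurableSpace.comap w inferInstance]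
            =ᵐ[ν] fun ω => M (inner ℝ (w ω) γ : ℝ))
    (hiii : ν[(fun ω => z ω * ε₁ ω) | MeasurableSpace.comap w inferInstance]
            =ᵐ[ν] fun ω => G (w ω) * M (inner ℝ (w ω) γ : ℝ)) :
    (∫ ω, z ω * (ε₁ ω - M (inner ℝ (w ω) γ : ℝ)) ∂ν) = 0
    ∧ (∫ ω, z ω * (ε₁ ω - M (inner ℝ (w ω) γ : ℝ)) ∂ν)
        - (∫ ω, z ω ∂ν) * (∫ ω, (ε₁ ω - M (inner ℝ (w ω) γ : ℝ)) ∂ν) = 0 := by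
  -- `μ[|S]` is zero or a probability measure, whatever `μ` and `S`.
  have : IsFiniteMeasure ν := hν ▸ inferInstance
  set m := MeasurableSpace.comap w inferInstance
  have hm : m ≤ _ := hw.comap_le
  have hcorr : ν[fun ω => z ω * ε₁ ω|m] =ᵐ[ν] fun ω => ν[z|m] ω * ν[ε₁|m] ω := by
    filter_upwards [hi, hii, hiii] with ω hzω hεω hzεω
    rw [hzεω, hzω, hεω]
  have horth : ∫ ω, z ω * (ε₁ ω - M (inner ℝ (w ω) γ)) ∂ν = 0 := by
    rw [← integral_mul_sub_condExp_eq_zero hm hz hzε₁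
      (hzM.congr (by filter_upwards [hii] with ω h; rw [h])) hcorr]
    exact integral_congr_ae (by filter_upwards [hii] with ω h; rw [h])
  have hmean : ∫ ω, (ε₁ ω - M (inner ℝ (w ω) γ)) ∂ν = 0 := by
    rw [← integral_sub_condExp_eq_zero hm hε₁]
    exact integral_congr_ae (by filter_upwards [hii] with ω h; rw [h])
  exact ⟨horth, by rw [horth, hmean, mul_zero, sub_zero]⟩

/-- **Theorem 3 (Bias removal).** Under the truncated measure
`ν = μ(· | {s = 1})`, removing the contamination factor `M(⟨w,γ⟩)` from the
disturbance restores orthogonality of the instrument: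
`E_ν[z·(ε₁ − M(⟨w,γ⟩))] = 0` and `Cov_ν(z, ε₁ − M(⟨w,γ⟩)) = 0`. -/
theorem iv_bias_removal
    {Ω : Type*} [MeasurableSpace Ω] (μ : Measure Ω) [IsProbabilityMeasure μ]
    (s : Ω → ℝ) (hs : Measurable s) (hs01 : ∀ ω, s ω = 0 ∨ s ω = 1)
    (hpos : 0 < μ {ω | s ω = 1})
    (ν : Measure Ω) (hν : ν = μ[|{ω | s ω = 1}])
    {l : ℕ} (w : Ω → EuclideanSpace ℝ (Fin l)) (hw : Measurable w)
    (γ : EuclideanSpace ℝ (Fin l)) (z ε₁ : Ω → ℝ)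
    (hz : Integrable z ν) (hε₁ : Integrable ε₁ ν)
    (hzε₁ : Integrable (fun ω => z ω * ε₁ ω) ν)
    (G : EuclideanSpace ℝ (Fin l) → ℝ) (hG : Measurable G)
    (M : ℝ → ℝ) (hM : Measurable M)
    (hzM : Integrable (fun ω => z ω * M (inner ℝ (w ω) γ : ℝ)) ν)
    (hi : ν[z | MeasurableSpace.comap w inferInstance]
            =ᵐ[ν] fun ω => G (w ω))
    (hii : ν[ε₁ | MeasurableSpace.comap w inferInstance]
            =ᵐ[ν] fun ω => M (inner ℝ (w ω) γ : ℝ))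
    (hiii : ν[(fun ω => z ω * ε₁ ω) | MeasurableSpace.comap w inferInstance]
            =ᵐ[ν] fun ω => G (w ω) * M (inner ℝ (w ω) γ : ℝ)) :
    (∫ ω, z ω * (ε₁ ω - M (inner ℝ (w ω) γ : ℝ)) ∂ν) = 0
    ∧ (∫ ω, z ω * (ε₁ ω - M (inner ℝ (w ω) γ : ℝ)) ∂ν)
        - (∫ ω, z ω ∂ν) * (∫ ω, (ε₁ ω - M (inner ℝ (w ω) γ : ℝ)) ∂ν) = 0 :=
  iv_bias_removal_general μ s ν hν w hw γ z ε₁ hz hε₁ hzε₁ G M hzM hi hii hiii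
end

section
/- Fix λ > 0, γ > 1, and α > 1/γ, and let t ∈ ℝ. Consider the univariate regularized least squares objective f(δ) = (1/2)(δ − t)² + (1/α)·ρ_{λ,γ}(|δ|), where ρ_{λ,γ} is the minimax concave penalty. Then f attains its unique global minimum over ℝ at δ* = S_α(t; λ, γ); explicitly, δ* = 0 if |t| ≤ λ/α; δ* = sign(t)·(|t| − λ/α)/(1 − 1/(αγ)) if λ/α < |t| ≤ γλ; and δ* = t if |t| > γλ. -/
noncomputable def mcpPenalty (lam gam θ : ℝ) : ℝ :=
  if θ ≤ gam * lam then lam * θ - θ ^ 2 / (2 * gam) else lam ^ 2 * gam / 2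

noncomputable def mcpThreshold (α lam gam t : ℝ) : ℝ :=
  if |t| ≤ lam / α then 0
  else if |t| ≤ gam * lam then
    Real.sign t * (|t| - lam / α) / (1 - 1 / (α * gam))
  else t

lemma mcpThreshold_neg (α lam gam t : ℝ) :
    mcpThreshold α lam gam (-t) = - mcpThreshold α lam gam t := by
  simp only [mcpThreshold, abs_neg, Real.sign_neg]
  split_ifs <;> ring

set_option maxHeartbeats 1000000 in
lemma mcp_aux (lam gam α t : ℝ) (hlam : 0 < lam) (hgam : 1 < gam) (hα : 1 / gam < α)
    (ht : 0 ≤ t) :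
    ∀ δ : ℝ, δ ≠ mcpThreshold α lam gam t →
      (1 / 2) * (mcpThreshold α lam gam t - t) ^ 2
          + (1 / α) * mcpPenalty lam gam |mcpThreshold α lam gam t|
        < (1 / 2) * (δ - t) ^ 2 + (1 / α) * mcpPenalty lam gam |δ| := by
  have hγ0 : (0:ℝ) < gam := by linarith
  have hα0 : (0:ℝ) < α := lt_trans (by positivity) hα
  have hαγ : 1 < α * gam := by
    have := (div_lt_iff₀ hγ0).mp hα
    linarith
  have habs : |t| = t := abs_of_nonneg ht
  have hαne : α ≠ 0 := ne_of_gt hα0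
  have hpos : (0:ℝ) < 2 * α * gam := by positivity
  have hγne : gam ≠ 0 := ne_of_gt hγ0
  intro δ hδ
  by_cases h1 : t ≤ lam / α
  · -- threshold = 0
    have hthr : mcpThreshold α lam gam t = 0 := by
      simp [mcpThreshold, habs, h1]
    rw [hthr] at hδ ⊢
    have hδ0 : 0 < |δ| := abs_pos.mpr hδ
    have hdle : δ ≤ |δ| := le_abs_self δ
    have hsq : |δ| ^ 2 = δ ^ 2 := sq_abs δ
    have htd : t * δ ≤ (lam / α) * |δ| := by
      calc t * δ ≤ t * |δ| := by nlinarith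
        _ ≤ (lam / α) * |δ| := by nlinarith
    simp only [abs_zero, mcpPenalty]
    rw [if_pos (by positivity)]
    have htd2 : gam * (α * (t * δ)) ≤ gam * (lam * |δ|) := by
      have hh1 : α * t ≤ lam := by
        rw [le_div_iff₀ hα0] at h1; linarith [h1]
      nlinarith [mul_nonneg (mul_nonneg hγ0.le hα0.le) (mul_nonneg ht (sub_nonneg.2 hdle)),
        mul_nonneg (mul_nonneg hγ0.le (abs_nonneg δ)) (sub_nonneg.2 hh1)]
    by_cases h2 : |δ| ≤ gam * lam
    · rw [if_pos h2, ← sub_pos]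
      refine lt_of_lt_of_eq (div_pos (show (0:ℝ) <
          α * gam * δ^2 - 2*(gam*(α*(t*δ))) + 2*gam*lam*|δ| - |δ|^2 from ?_) hpos) ?_
      · nlinarith [hsq, htd2, mul_pos hδ0 hδ0, hαγ]
      · field_simp
        ring
    · rw [if_neg h2, ← sub_pos]
      push_neg at h2
      refine lt_of_lt_of_eq (div_pos (show (0:ℝ) <
          α * gam * δ^2 - 2*(gam*(α*(t*δ))) + gam^2*lam^2 from ?_) hpos) ?_
      · nlinarith [hsq, htd2, mul_pos hδ0 hδ0, hαγ, sq_nonneg (|δ| - gam*lam)]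
      · field_simp
        ring
  · push_neg at h1
    have ht0 : (0:ℝ) < t := lt_trans (by positivity) h1
    by_cases h2 : t ≤ gam * lam
    · -- middle regime
      have hD0 : (0:ℝ) < 1 - 1/(α*gam) := by
        rw [sub_pos, div_lt_one (by positivity)]; exact hαγ
      have hDne : (1 - 1/(α*gam)) ≠ 0 := ne_of_gt hD0
      have hthr : mcpThreshold α lam gam t = (t - lam/α)/(1 - 1/(α*gam)) := by
        simp [mcpThreshold, habs, not_le.2 h1, h2, Real.sign_of_pos ht0]
      set s := (t - lam/α)/(1 - 1/(α*gam)) with hs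
      have hs0 : 0 < s := div_pos (by linarith) hD0
      have hsle : s ≤ gam*lam := by
        rw [hs, div_le_iff₀ hD0]
        have he : gam*lam*(1 - 1/(α*gam)) = gam*lam - lam/α := by field_simp
        rw [he]; linarith
      rw [hthr] at hδ ⊢
      rw [abs_of_pos hs0]
      simp only [mcpPenalty]
      rw [if_pos hsle]
      have key : ∀ x : ℝ, |x| ≤ gam*lam →
          (1/2)*(s - t)^2 + (1/α)*(lam*s - s^2/(2*gam))
              + ((1 - 1/(α*gam))/2)*(x - s)^2
            ≤ (1/2)*(x - t)^2 + (1/α)*(lam*|x| - |x|^2/(2*gam)) := by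
        intro x hx
        have hxle : x ≤ |x| := le_abs_self x
        have hxsq : |x|^2 = x^2 := sq_abs x
        have hsc : (1 - 1/(α*gam)) * s = t - lam/α := by
          rw [hs, mul_comm, div_mul_cancel₀ _ hDne]
        rw [← sub_nonneg, hxsq]
        calc (0:ℝ) ≤ lam*(|x| - x)/α + (x - s)*((1 - 1/(α*gam))*s - (t - lam/α)) := by
              rw [hsc, sub_self, mul_zero, add_zero]
              exact div_nonneg (mul_nonneg hlam.le (by linarith)) hα0.le
          _ = _ := by ring
      by_cases h3 : |δ| ≤ gam*lam
      · rw [if_pos h3]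
        have hk := key δ h3
        have hne : δ - s ≠ 0 := sub_ne_zero.2 hδ
        have hsq : 0 < (δ - s)^2 := by positivity
        have : 0 < ((1 - 1/(α*gam))/2)*(δ - s)^2 := by positivity
        linarith
      · rw [if_neg h3]
        push_neg at h3
        have h6 : lam*(gam*lam) - (gam*lam)^2/(2*gam) = lam^2*gam/2 := by
          field_simp; ring
        rcases le_or_gt 0 δ with hd0 | hd0
        · have hk := key (gam*lam) (by rw [abs_of_pos (by positivity)])
          rw [abs_of_pos (by positivity : (0:ℝ) < gam*lam), h6] at hk
          have hδgt : gam*lam < δ := by rwa [abs_of_nonneg hd0] at h3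
          have h5 : (gam*lam - t)^2 < (δ - t)^2 := by nlinarith
          have hnn : 0 ≤ ((1 - 1/(α*gam))/2)*(gam*lam - s)^2 := by positivity
          linarith
        · have hk := key (-(gam*lam)) (by rw [abs_neg, abs_of_pos (by positivity)])
          rw [abs_neg, abs_of_pos (by positivity : (0:ℝ) < gam*lam), h6] at hk
          have hδlt : δ < -(gam*lam) := by
            have := abs_of_neg hd0
            linarith [h3, this]
          have h5 : (-(gam*lam) - t)^2 < (δ - t)^2 := by nlinarith
          have hnn : 0 ≤ ((1 - 1/(α*gam))/2)*(-(gam*lam) - s)^2 := by positivity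
          linarith
    · -- large |t|
      push_neg at h2
      have hthr : mcpThreshold α lam gam t = t := by
        have : ¬ (t ≤ lam / α) := not_le.2 h1
        simp [mcpThreshold, habs, this, not_le.2 h2]
      rw [hthr] at hδ ⊢
      rw [habs]
      simp only [mcpPenalty]
      rw [if_neg (not_le.2 h2)]
      by_cases h3 : |δ| ≤ gam*lam
      · rw [if_pos h3, ← sub_pos]
        refine lt_of_lt_of_eq (div_pos (show (0:ℝ) <
            α*gam*(δ-t)^2 + 2*gam*lam*|δ| - |δ|^2 - gam^2*lam^2 from ?_) hpos) ?_
        · have hdle : δ ≤ |δ| := le_abs_self δ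
          have h4 : gam*lam - |δ| < t - δ := by linarith
          have h40 : 0 ≤ gam*lam - |δ| := by linarith
          nlinarith [sq_nonneg (δ - t), sq_abs δ, abs_nonneg δ]
        · field_simp
          ring
      · rw [if_neg h3]
        have hne : δ - t ≠ 0 := sub_ne_zero.2 hδ
        have : 0 < (δ - t)^2 := by positivity
        have h7 : 0 < (1/2) * (δ - t)^2 := by positivity
        have h8 : (t - t)^2 = 0 := by ring
        rw [h8]
        linarith

/-- **Appendix A, main result.** For `λ > 0`, `γ > 1`, `α > 1/γ`, the
objective `f(δ) = (1/2)(δ − t)² + (1/α)ρ_{λ,γ}(|δ|)` attains its unique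
global minimum over `ℝ` at `δ* = S_α(t; λ, γ)`. -/
theorem mcp_threshold_is_unique_minimizer
    (lam gam α t : ℝ) (hlam : 0 < lam) (hgam : 1 < gam) (hα : 1 / gam < α) :
    ∀ δ : ℝ, δ ≠ mcpThreshold α lam gam t →
      (1 / 2) * (mcpThreshold α lam gam t - t) ^ 2
          + (1 / α) * mcpPenalty lam gam |mcpThreshold α lam gam t|
        < (1 / 2) * (δ - t) ^ 2 + (1 / α) * mcpPenalty lam gam |δ| := by
  intro δ hδ
  rcases le_or_gt 0 t with h | h
  · exact mcp_aux lam gam α t hlam hgam hα h δ hδ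
  · have h2 := mcp_aux lam gam α (-t) hlam hgam hα (by linarith) (-δ)
      (by rw [mcpThreshold_neg]; exact fun hc => hδ (by linarith [neg_injective hc]))
    rw [mcpThreshold_neg, abs_neg, abs_neg] at h2
    have e1 : (-mcpThreshold α lam gam t - -t) ^ 2 = (mcpThreshold α lam gam t - t)^2 := by ring
    have e2 : (-δ - -t)^2 = (δ - t)^2 := by ring
    rw [e1, e2] at h2
    exact h2
end

section
/- Fix λ > 0, γ > 1, α > 1/γ, and t ∈ ℝ. The function f(δ) = (1/2)(δ − t)² + (1/α)·ρ_{λ,γ}(|δ|), where ρ_{λ,γ} is the minimax concave penalty, is strictly convex on ℝ; consequently it has at most one global minimizer. -/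
open Set

lemma mcpPenalty_add_sq_div {lam gam : ℝ} (hgam : gam ≠ 0) (θ : ℝ) :
    mcpPenalty lam gam θ + θ ^ 2 / (2 * gam)
      = lam * θ + max (θ - gam * lam) 0 ^ 2 / (2 * gam) := by
  unfold mcpPenalty
  split_ifs with hθ
  · rw [max_eq_right (by linarith)]
    ring
  · rw [max_eq_left (by linarith)]
    field_simp
    ring

lemma convexOn_sq_max_abs_sub (s : ℝ) :
    ConvexOn ℝ univ (fun δ : ℝ => max (|δ| - s) 0 ^ 2) := by
  have hshift : ConvexOn ℝ univ (fun δ : ℝ => |δ| - s) :=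
    (convexOn_univ_norm (E := ℝ)).sub (concaveOn_const s convex_univ)
  have hmax : ConvexOn ℝ univ (fun δ : ℝ => max (|δ| - s) 0) :=
    hshift.sup (convexOn_const 0 convex_univ)
  exact hmax.pow (fun _ _ => le_max_right _ _) 2

lemma convexOn_mul_abs_add_sq_max_div {lam gam : ℝ} (hlam : 0 ≤ lam) (hgam : 0 ≤ gam) :
    ConvexOn ℝ univ
      (fun δ : ℝ => lam * |δ| + max (|δ| - gam * lam) 0 ^ 2 / (2 * gam)) := by
  have habs : ConvexOn ℝ univ (fun δ : ℝ => lam * |δ|) :=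
    (convexOn_univ_norm (E := ℝ)).smul hlam
  have hsq : ConvexOn ℝ univ (fun δ : ℝ => max (|δ| - gam * lam) 0 ^ 2 / (2 * gam)) := by
    simpa only [smul_eq_mul, div_eq_inv_mul] using
      (convexOn_sq_max_abs_sub (gam * lam)).smul (c := (2 * gam)⁻¹) (by positivity)
  exact habs.add hsq

lemma strictConvexOn_quadratic_add {c : ℝ} (b : ℝ) {g : ℝ → ℝ} (hc : 0 < c)
    (hg : ConvexOn ℝ univ g) :
    StrictConvexOn ℝ univ (fun x : ℝ => c * x ^ 2 + b * x + g x) := by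
  refine ⟨convex_univ, fun x _ y _ hxy a a' ha ha' haa' => ?_⟩
  obtain rfl : a' = 1 - a := by linarith
  have hg' := hg.2 (mem_univ x) (mem_univ y) ha.le ha'.le haa'
  have hgap : 0 < c * a * (1 - a) * (x - y) ^ 2 := by
    have := sub_ne_zero.2 hxy
    positivity
  have hquad : a * (c * x ^ 2 + b * x) + (1 - a) * (c * y ^ 2 + b * y)
      - (c * (a * x + (1 - a) * y) ^ 2 + b * (a * x + (1 - a) * y))
      = c * a * (1 - a) * (x - y) ^ 2 := by ring
  simp only [smul_eq_mul] at hg' ⊢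
  linarith

/-- **Strict convexity of the MCP proximal objective.** For `λ > 0`, `γ > 1`,
`α > 1/γ`, the function `f(δ) = (1/2)(δ − t)² + (1/α)ρ_{λ,γ}(|δ|)` is strictly
convex on `ℝ`; consequently it has at most one global minimizer. -/
theorem mcp_objective_strictConvex
    (lam gam α t : ℝ) (hlam : 0 < lam) (hgam : 1 < gam) (hα : 1 / gam < α) :
    StrictConvexOn ℝ Set.univ
      (fun δ : ℝ => (1 / 2) * (δ - t) ^ 2 + (1 / α) * mcpPenalty lam gam |δ|)
    ∧ ∀ δ₁ δ₂ : ℝ,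
      (∀ δ : ℝ, (1 / 2) * (δ₁ - t) ^ 2 + (1 / α) * mcpPenalty lam gam |δ₁|
          ≤ (1 / 2) * (δ - t) ^ 2 + (1 / α) * mcpPenalty lam gam |δ|) →
      (∀ δ : ℝ, (1 / 2) * (δ₂ - t) ^ 2 + (1 / α) * mcpPenalty lam gam |δ₂|
          ≤ (1 / 2) * (δ - t) ^ 2 + (1 / α) * mcpPenalty lam gam |δ|) →
      δ₁ = δ₂ := by
  have hgam₀ : 0 < gam := one_pos.trans hgam
  have hα₀ : 0 < α := (one_div_pos.2 hgam₀).trans hα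
  have hc : 0 < (1 - 1 / (α * gam)) / 2 := by
    have : 1 / (α * gam) < 1 := by
      rw [div_lt_one (by positivity)]
      exact (div_lt_iff₀ hgam₀).1 hα
    linarith
  have hsplit : (fun δ : ℝ => (1 / 2) * (δ - t) ^ 2 + (1 / α) * mcpPenalty lam gam |δ|)
      = fun δ => (1 - 1 / (α * gam)) / 2 * δ ^ 2 + (-t) * δ
        + (1 / α * (lam * |δ| + max (|δ| - gam * lam) 0 ^ 2 / (2 * gam)) + t ^ 2 / 2) := by
    funext δ
    rw [← mcpPenalty_add_sq_div hgam₀.ne', sq_abs]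
    field_simp
    ring
  have hconv : StrictConvexOn ℝ univ
      (fun δ : ℝ => (1 / 2) * (δ - t) ^ 2 + (1 / α) * mcpPenalty lam gam |δ|) := by
    rw [hsplit]
    refine strictConvexOn_quadratic_add (-t) hc ?_
    exact ((convexOn_mul_abs_add_sq_max_div hlam.le hgam₀.le).smul
      (one_div_pos.2 hα₀).le).add_const _
  refine ⟨hconv, fun δ₁ δ₂ h₁ h₂ => ?_⟩
  exact hconv.eq_of_isMinOn (isMinOn_univ_iff.2 h₁) (isMinOn_univ_iff.2 h₂) trivial trivial
end

section
/- Fix λ > 0, γ > 1, α > 1/γ, and t ∈ ℝ, and let δ* be the unique global minimizer of f(δ) = (1/2)(δ − t)² + (1/α)·ρ_{λ,γ}(|δ|), where ρ_{λ,γ} is the minimax concave penalty. Then |δ*| > γλ if and only if |t| > γλ; and whenever |t| > γλ, the minimizer equals the unpenalized value, δ* = t. -/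
/-- **Appendix A, intermediate equivalence.** For `λ > 0`, `γ > 1`, `α > 1/γ`,
if `δ*` is the unique global minimizer of
`f(δ) = (1/2)(δ − t)² + (1/α)ρ_{λ,γ}(|δ|)`, then `|δ*| > γλ ↔ |t| > γλ`, and
whenever `|t| > γλ` the minimizer equals the unpenalized value `δ* = t`. -/
theorem mcp_minimizer_threshold_equivalence
    (lam gam α t δstar : ℝ) (hlam : 0 < lam) (hgam : 1 < gam) (hα : 1 / gam < α)
    (hmin : ∀ δ : ℝ,
      (1 / 2) * (δstar - t) ^ 2 + (1 / α) * mcpPenalty lam gam |δstar|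
        ≤ (1 / 2) * (δ - t) ^ 2 + (1 / α) * mcpPenalty lam gam |δ|)
    (huniq : ∀ δ : ℝ,
      (∀ δ' : ℝ, (1 / 2) * (δ - t) ^ 2 + (1 / α) * mcpPenalty lam gam |δ|
        ≤ (1 / 2) * (δ' - t) ^ 2 + (1 / α) * mcpPenalty lam gam |δ'|) →
      δ = δstar) :
    (gam * lam < |δstar| ↔ gam * lam < |t|)
    ∧ (gam * lam < |t| → δstar = t) := by
  have hgam0 : (0:ℝ) < gam := lt_trans one_pos hgam
  have hα0 : 0 < α := lt_trans (by positivity) hα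
  have hαγ : 1 < α * gam := by
    rw [div_lt_iff₀ hgam0] at hα; linarith
  -- penalty value at gam*lam
  have hpen_thr : mcpPenalty lam gam (gam * lam) = lam ^ 2 * gam / 2 := by
    simp only [mcpPenalty, if_pos le_rfl]
    field_simp; ring
  have hgl_pos : 0 < gam * lam := by positivity
  -- Part 2: if |t| > gam*lam then t is a global minimizer, so δstar = t.
  have part2 : gam * lam < |t| → δstar = t := by
    intro ht
    have htnot : ¬ |t| ≤ gam * lam := not_le.mpr ht
    refine (huniq t ?_).symm
    intro δ
    have hpent : mcpPenalty lam gam |t| = lam ^ 2 * gam / 2 := by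
      simp [mcpPenalty, htnot]
    rw [hpent]
    by_cases hδ : |δ| ≤ gam * lam
    · have hpend : mcpPenalty lam gam |δ| = lam * |δ| - |δ| ^ 2 / (2 * gam) := by
        simp [mcpPenalty, hδ]
      rw [hpend]
      have habs : |t| - |δ| ≤ |δ - t| := by
        have := abs_sub_abs_le_abs_sub t δ
        rwa [abs_sub_comm] at this
      have h1 : (gam * lam - |δ|) ^ 2 ≤ (δ - t) ^ 2 := by
        have h2 : 0 ≤ gam * lam - |δ| := by linarith
        have h3 : gam * lam - |δ| ≤ |δ - t| := by linarith
        calc (gam * lam - |δ|) ^ 2 ≤ |δ - t| ^ 2 := by nlinarith [abs_nonneg (δ - t)]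
          _ = (δ - t) ^ 2 := sq_abs _
      -- key: (1/α)(λ²γ/2 - λ|δ| + |δ|²/(2γ)) = (1/(2αγ))(γλ - |δ|)² ≤ ½(γλ-|δ|)²
      have key : (1 / α) * (lam ^ 2 * gam / 2) ≤
          (1 / 2) * (gam * lam - |δ|) ^ 2 + (1 / α) * (lam * |δ| - |δ| ^ 2 / (2 * gam)) := by
        rw [← sub_nonneg]
        have e : ∀ s : ℝ, (1 / 2) * (gam * lam - s) ^ 2
              + (1 / α) * (lam * s - s ^ 2 / (2 * gam))
              - (1 / α) * (lam ^ 2 * gam / 2)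
            = (α * gam - 1) * (gam * lam - s) ^ 2 / (2 * α * gam) := by
          intro s
          field_simp
          ring
        rw [e |δ|]
        apply div_nonneg _ (by positivity)
        nlinarith [sq_nonneg (gam * lam - |δ|)]
      nlinarith [h1]
    · have hpend : mcpPenalty lam gam |δ| = lam ^ 2 * gam / 2 := by
        simp [mcpPenalty, hδ]
      rw [hpend]
      nlinarith [sq_nonneg (δ - t)]
  constructor
  · constructor
    · -- contrapositive: |t| ≤ gam*lam → |δstar| ≤ gam*lam
      intro hδs
      by_contra ht
      push_neg at ht
      have hpens : mcpPenalty lam gam |δstar| = lam ^ 2 * gam / 2 := by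
        simp [mcpPenalty, not_le.mpr hδs]
      -- compare with δ' = ±(gam*lam)
      rcases le_or_gt 0 δstar with hpos | hneg
      · have hd : δstar = |δstar| := (abs_of_nonneg hpos).symm
        have h := hmin (gam * lam)
        rw [hpens, abs_of_pos hgl_pos, hpen_thr] at h
        have h1 : gam * lam - t ≥ 0 := by
          have := abs_le.mp ht; linarith [this.2]
        have h2 : δstar - t > gam * lam - t := by
          rw [hd]; linarith [(abs_le.mp ht).2]
        nlinarith
      · have hd : δstar = -|δstar| := by rw [abs_of_neg hneg]; ring
        have h := hmin (-(gam * lam))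
        rw [hpens, abs_neg, abs_of_pos hgl_pos, hpen_thr] at h
        have h1 : -(gam * lam) - t ≤ 0 := by linarith [(abs_le.mp ht).1]
        have h2 : δstar - t < -(gam * lam) - t := by
          have : δstar < -(gam * lam) := by rw [hd]; linarith
          linarith
        nlinarith
    · intro ht
      rw [part2 ht]; exact ht
  · exact part2
end
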